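/- Let K be a star body about the origin in ℝ^n and φ ∈ Φ. Then the Orlicz-Legendre ellipsoid satisfies V(L_φ K) ≥ V(K), with equality if and only if K is an origin-symmetric ellipsoid. -/

import Mathlib

open MeasureTheory Metric Set

noncomputable section

/-- The radial function of a set: `ρ_K x = sup {r ≥ 0 : r • x ∈ K}`. -/
def radialFn {n : ℕ} (K : Set (EuclideanSpace ℝ (Fin n))) (x : EuclideanSpace ℝ (Fin n)) : ℝ :=
  sSup {r : ℝ | 0 ≤ r ∧ r • x ∈ K}

/-- A star body about the origin: compact, with `0` in its interior, star-shaped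
with respect to the origin, and with continuous radial function on the sphere. -/
def IsStarBody {n : ℕ} (K : Set (EuclideanSpace ℝ (Fin n))) : Prop :=
  IsCompact K ∧ (0 : EuclideanSpace ℝ (Fin n)) ∈ interior K ∧
    (∀ x ∈ K, ∀ t : ℝ, t ∈ Icc (0 : ℝ) 1 → t • x ∈ K) ∧
    Continuous fun u : sphere (0 : EuclideanSpace ℝ (Fin n)) 1 => radialFn K u

/-- The spherical Lebesgue measure on the unit sphere `S^{n-1}`. -/
def sphereMeasure (n : ℕ) : Measure (sphere (0 : EuclideanSpace ℝ (Fin n)) 1) :=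
  (volume : Measure (EuclideanSpace ℝ (Fin n))).toSphere


/-- The normalized dual conical measure `dV_K^* = ρ_K^n/(n V(K)) dS`. -/
def normDualConical (n : ℕ) (K : Set (EuclideanSpace ℝ (Fin n))) :
    Measure (sphere (0 : EuclideanSpace ℝ (Fin n)) 1) :=
  (sphereMeasure n).withDensity fun u =>
    ENNReal.ofReal ((radialFn K u) ^ n / (n * (volume K).toReal))

/-- `O_φ(K,L) = inf {t > 0 : ∫ φ (ρ_K/(t ρ_L)) dV_K^* ≤ φ 1}`
(equivalently, `φ⁻¹ (∫ φ (ρ_K/(t ρ_L)) dV_K^*) ≤ 1`). -/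
def Ofun (n : ℕ) (φ : ℝ → ℝ) (K L : Set (EuclideanSpace ℝ (Fin n))) : ℝ :=
  sInf {t : ℝ | 0 < t ∧
    ∫ u, φ (radialFn K u / (t * radialFn L u)) ∂(normDualConical n K) ≤ φ 1}

/-- An origin-symmetric (nondegenerate) ellipsoid: the image of the closed unit
ball under an invertible linear map. -/
def IsEllipsoid {n : ℕ} (E : Set (EuclideanSpace ℝ (Fin n))) : Prop :=
  ∃ T : EuclideanSpace ℝ (Fin n) ≃ₗ[ℝ] EuclideanSpace ℝ (Fin n),
    E = T '' Metric.closedBall 0 1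

/-!
Write `I = ∫ ρ_K / ρ_L dV_K^*`. Jensen's inequality for `φ` shows that every `t` admissible in
the infimum defining `O_φ(K, L)` is at least `I`, so `I ≤ O_φ(K, L) ≤ 1`. Jensen's inequality
for `x ↦ x⁻ⁿ` and the probability measure `dV_K^*` gives
`I⁻ⁿ ≤ ∫ (ρ_L / ρ_K)ⁿ dV_K^* = V(L) / V(K)`, i.e. `V(K) ≤ V(L) Iⁿ ≤ V(L)`. If `V(K) = V(L)`,
then `I = 1` and strict convexity forces `ρ_K / ρ_L` to be constant, so `K = L`. Conversely an
ellipsoid `K` is admissible for itself, and minimality of `L` gives `V(L) ≤ V(K)`.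
-/

local notation "𝔼" n => EuclideanSpace ℝ (Fin n)
local notation "𝕊" n => sphere (0 : EuclideanSpace ℝ (Fin n)) 1

section Jensen

theorem Continuous.exists_pos_le {X : Type*} [TopologicalSpace X] [CompactSpace X] {f : X → ℝ}
    (hf : Continuous f) (hpos : ∀ x, 0 < f x) : ∃ a, 0 < a ∧ ∀ x, a ≤ f x := by
  simpa using isCompact_univ.exists_forall_le' hf.continuousOn fun x _ => hpos x

variable {X : Type*} [TopologicalSpace X] [CompactSpace X] [MeasurableSpace X]
  [OpensMeasurableSpace X] {μ : Measure X} {f : X → ℝ}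

theorem Continuous.integrable_of_compactSpace [IsFiniteMeasure μ] (hf : Continuous f) :
    Integrable f μ :=
  hf.integrable_of_hasCompactSupport (HasCompactSupport.of_compactSpace f)

variable [IsProbabilityMeasure μ]

theorem Continuous.integral_pos_of_pos (hf : Continuous f) (hpos : ∀ x, 0 < f x) :
    0 < ∫ x, f x ∂μ := by
  obtain ⟨a, ha, hfa⟩ := hf.exists_pos_le hpos
  exact ha.trans_le <| by
    simpa using integral_mono (integrable_const a) hf.integrable_of_compactSpace (μ := μ) hfa

/-- Compactness makes `f` take values in a closed half-line `[a, ∞)` with `a > 0`, where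
Mathlib's Jensen inequality (which needs a closed domain) applies. -/
theorem ConvexOn.map_integral_le_of_pos {g : ℝ → ℝ} (hg : ConvexOn ℝ (Ioi 0) g)
    (hf : Continuous f) (hpos : ∀ x, 0 < f x) : g (∫ x, f x ∂μ) ≤ ∫ x, g (f x) ∂μ := by
  obtain ⟨a, ha, hfa⟩ := hf.exists_pos_le hpos
  have hsub : Ici a ⊆ Ioi 0 := Ici_subset_Ioi.2 ha
  have hgc : ContinuousOn g (Ioi 0) := hg.continuousOn isOpen_Ioi
  exact (hg.subset hsub (convex_Ici a)).map_integral_le (hgc.mono hsub) isClosed_Ici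
    (.of_forall hfa) hf.integrable_of_compactSpace
    (hgc.comp_continuous hf hpos).integrable_of_compactSpace

theorem StrictConvexOn.ae_eq_integral_or_map_integral_lt_of_pos {g : ℝ → ℝ}
    (hg : StrictConvexOn ℝ (Ioi 0) g) (hf : Continuous f) (hpos : ∀ x, 0 < f x) :
    f =ᵐ[μ] Function.const X (∫ x, f x ∂μ) ∨ g (∫ x, f x ∂μ) < ∫ x, g (f x) ∂μ := by
  obtain ⟨a, ha, hfa⟩ := hf.exists_pos_le hpos
  have hsub : Ici a ⊆ Ioi 0 := Ici_subset_Ioi.2 ha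
  have hgc : ContinuousOn g (Ioi 0) := hg.convexOn.continuousOn isOpen_Ioi
  simpa only [average_eq_integral] using
    (hg.subset hsub (convex_Ici a)).ae_eq_const_or_map_average_lt (hgc.mono hsub) isClosed_Ici
      (μ := μ) (.of_forall hfa) hf.integrable_of_compactSpace
      (hgc.comp_continuous hf hpos).integrable_of_compactSpace

theorem integral_le_sInf_of_convexOn {φ : ℝ → ℝ} (hφc : ConvexOn ℝ (Ioi 0) φ)
    (hφm : StrictMonoOn φ (Ioi 0)) (hf : Continuous f) (hpos : ∀ x, 0 < f x) :
    ∫ x, f x ∂μ ≤ sInf {t : ℝ | 0 < t ∧ ∫ x, φ (f x / t) ∂μ ≤ φ 1} := by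
  have hφcont : ContinuousOn φ (Ioi 0) := hφc.continuousOn isOpen_Ioi
  obtain ⟨C, hC⟩ := (isCompact_range hf).bddAbove
  set t₀ := max C 1
  have ht₀ : 0 < t₀ := lt_max_of_lt_right one_pos
  refine le_csInf ⟨t₀, ht₀, ?_⟩ ?_
  · have hle : ∀ x, φ (f x / t₀) ≤ φ 1 := fun x =>
      hφm.monotoneOn (div_pos (hpos x) ht₀) (mem_Ioi.2 one_pos) <|
        (div_le_one ht₀).2 ((hC (mem_range_self x)).trans (le_max_left C 1))
    calc ∫ x, φ (f x / t₀) ∂μ ≤ ∫ _, φ 1 ∂μ :=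
          integral_mono (hφcont.comp_continuous (hf.div_const t₀)
            fun x => div_pos (hpos x) ht₀).integrable_of_compactSpace (integrable_const _) hle
      _ = φ 1 := by simp
  · rintro t ⟨ht, hint⟩
    have hJensen := (hφc.map_integral_le_of_pos (μ := μ) (hf.div_const t)
      fun x => div_pos (hpos x) ht).trans hint
    have hmean : ∫ x, f x / t ∂μ ≤ 1 := by
      by_contra! h
      exact (hφm (mem_Ioi.2 one_pos) (mem_Ioi.2 (one_pos.trans h)) h).not_ge hJensen
    rwa [integral_div, div_le_one ht] at hmean

end Jensen

namespace IsStarBody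

variable {n : ℕ} {K L : Set (𝔼 n)}

theorem zero_mem (hK : IsStarBody K) : (0 : 𝔼 n) ∈ K := interior_subset hK.2.1

theorem bddAbove_setOf_smul_mem (hK : IsStarBody K) (u : 𝕊 n) :
    BddAbove {r : ℝ | 0 ≤ r ∧ r • (u : 𝔼 n) ∈ K} := by
  obtain ⟨R, hR⟩ := hK.1.isBounded.subset_closedBall 0
  refine ⟨R, fun r hr => ?_⟩
  simpa [norm_smul, abs_of_nonneg hr.1] using hR hr.2

theorem smul_radialFn_mem (hK : IsStarBody K) (u : 𝕊 n) : radialFn K u • (u : 𝔼 n) ∈ K := by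
  have hclosed : IsClosed {r : ℝ | 0 ≤ r ∧ r • (u : 𝔼 n) ∈ K} :=
    isClosed_Ici.inter (hK.1.isClosed.preimage (by fun_prop))
  exact (hclosed.csSup_mem ⟨0, le_rfl, by simpa using hK.zero_mem⟩
    (hK.bddAbove_setOf_smul_mem u)).2

theorem radialFn_pos (hK : IsStarBody K) (u : 𝕊 n) : 0 < radialFn K u := by
  obtain ⟨ε, hε, hball⟩ := Metric.mem_nhds_iff.1 (mem_interior_iff_mem_nhds.1 hK.2.1)
  have hmem : (ε / 2) • (u : 𝔼 n) ∈ K :=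
    hball (by simp [norm_smul, abs_of_pos hε, hε])
  exact (half_pos hε).trans_le (le_csSup (hK.bddAbove_setOf_smul_mem u) ⟨(half_pos hε).le, hmem⟩)

theorem smul_mem_iff (hK : IsStarBody K) (u : 𝕊 n) {r : ℝ} (hr : 0 ≤ r) :
    r • (u : 𝔼 n) ∈ K ↔ r ≤ radialFn K u := by
  refine ⟨fun h => le_csSup (hK.bddAbove_setOf_smul_mem u) ⟨hr, h⟩, fun h => ?_⟩
  have hρ := hK.radialFn_pos u
  simpa [smul_smul, div_mul_cancel₀ r hρ.ne'] using
    hK.2.2.1 _ (hK.smul_radialFn_mem u) (r / radialFn K u) ⟨by positivity, (div_le_one hρ).2 h⟩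

theorem subset_of_radialFn_le (hK : IsStarBody K) (hL : IsStarBody L)
    (h : ∀ u : 𝕊 n, radialFn K u ≤ radialFn L u) : K ⊆ L := by
  intro x hx
  rcases eq_or_ne x 0 with rfl | hx0
  · exact hL.zero_mem
  have hnorm : ‖x‖ ≠ 0 := norm_ne_zero_iff.2 hx0
  let u : 𝕊 n := ⟨‖x‖⁻¹ • x, by simp [norm_smul, hnorm]⟩
  have hxu : ‖x‖ • (u : 𝔼 n) = x := by simp [u, smul_smul, hnorm]
  rw [← hxu] at hx ⊢
  exact (hL.smul_mem_iff u (norm_nonneg x)).2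
    (((hK.smul_mem_iff u (norm_nonneg x)).1 hx).trans (h u))

theorem eq_of_radialFn_eq (hK : IsStarBody K) (hL : IsStarBody L)
    (h : ∀ u : 𝕊 n, radialFn K u = radialFn L u) : K = L :=
  (hK.subset_of_radialFn_le hL fun u => (h u).le).antisymm
    (hL.subset_of_radialFn_le hK fun u => (h u).ge)

end IsStarBody

theorem radialFn_linearEquiv_image_closedBall {n : ℕ} (T : (𝔼 n) ≃ₗ[ℝ] 𝔼 n) (u : 𝕊 n) :
    radialFn (T '' closedBall 0 1) u = ‖T.symm u‖⁻¹ := by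
  have hc : 0 < ‖T.symm u‖ := by simp [ne_zero_of_mem_unit_sphere u]
  have hset : {r : ℝ | 0 ≤ r ∧ r • (u : 𝔼 n) ∈ T '' closedBall 0 1} = Icc 0 ‖T.symm u‖⁻¹ := by
    ext r
    simp only [T.image_eq_preimage_symm, mem_ofPred_eq, mem_preimage, mem_closedBall_zero_iff,
      map_smul, norm_smul, mem_Icc]
    exact and_congr_right fun hr => by rw [Real.norm_of_nonneg hr, ← one_div, le_div_iff₀ hc]
  rw [radialFn, hset, csSup_Icc (by positivity)]

theorem IsEllipsoid.isStarBody {n : ℕ} {E : Set (𝔼 n)} (hE : IsEllipsoid E) : IsStarBody E := by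
  obtain ⟨T, rfl⟩ := hE
  let S := T.toContinuousLinearEquiv
  refine ⟨(isCompact_closedBall 0 1).image S.continuous, ?_, ?_, ?_⟩
  · have h := S.toHomeomorph.image_interior (closedBall 0 1)
    simp only [ContinuousLinearEquiv.coe_toHomeomorph, interior_closedBall _ one_ne_zero] at h
    exact h ▸ ⟨0, by simp, map_zero S⟩
  · intro x hx t ht
    exact ((convex_closedBall 0 1).linear_image T.toLinearMap).smul_mem_of_zero_mem
      ⟨0, by simp, map_zero T⟩ hx ht
  · simp only [radialFn_linearEquiv_image_closedBall]
    exact (S.symm.continuous.comp continuous_subtype_val).norm.inv₀ fun u => by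
      simp [ne_zero_of_mem_unit_sphere u]

theorem MeasureTheory.Measure.volumeIoiPow_apply_Iic (n : ℕ) (x : Ioi (0 : ℝ)) :
    Measure.volumeIoiPow n (Iic x) = ENNReal.ofReal (x.1 ^ (n + 1) / (n + 1)) := by
  have hx : Measure.volumeIoiPow n {x} = 0 :=
    withDensity_absolutelyContinuous _ _ <| by
      rw [(MeasurableEmbedding.subtype_coe measurableSet_Ioi).comap_apply]; simp
  rw [← measure_congr (Iio_ae_eq_Iic' hx), Measure.volumeIoiPow_apply_Iio]

theorem radialFn_nonneg {n : ℕ} (K : Set (𝔼 n)) (x : 𝔼 n) : 0 ≤ radialFn K x :=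
  Real.sSup_nonneg fun _ hr => hr.1

instance (n : ℕ) : IsFiniteMeasure (sphereMeasure n) := by
  unfold sphereMeasure; infer_instance

instance (n : ℕ) : (sphereMeasure n).IsOpenPosMeasure := by
  unfold sphereMeasure; infer_instance

namespace IsStarBody

variable {n : ℕ} {K L : Set (𝔼 n)} {φ : ℝ → ℝ}

theorem continuous_radialFn_pow_div (hK : IsStarBody K) (c : ℝ) :
    Continuous fun u : 𝕊 n => radialFn K u ^ n / c := by
  have := hK.2.2.2
  fun_prop

theorem volume_pos (hK : IsStarBody K) : 0 < volume K :=
  Measure.measure_pos_of_nonempty_interior volume ⟨0, hK.2.1⟩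

theorem volume_ne_top (hK : IsStarBody K) : volume K ≠ ⊤ := hK.1.measure_lt_top.ne

theorem toReal_volume_pos (hK : IsStarBody K) : 0 < (volume K).toReal :=
  ENNReal.toReal_pos hK.volume_pos.ne' hK.volume_ne_top

/-- Volume in polar coordinates: Lebesgue measure on `ℝⁿ \ {0}` is the product of the spherical
measure and `rⁿ⁻¹ dr`, and the ray through `u` meets `K` in `(0, ρ_K u]`. -/
theorem lintegral_radialFn_pow (hn : 0 < n) (hK : IsStarBody K) :
    ∫⁻ u, ENNReal.ofReal (radialFn K u ^ n / n) ∂sphereMeasure n = volume K := by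
  have : Nontrivial (𝔼 n) := Module.nontrivial_of_finrank_pos (R := ℝ) (by simpa using hn)
  have hpolar := Measure.measurePreserving_homeomorphUnitSphereProd (volume : Measure (𝔼 n))
  rw [finrank_euclideanSpace_fin] at hpolar
  let T : Set ((𝕊 n) × Ioi (0 : ℝ)) := {p | (p.2 : ℝ) • (p.1 : 𝔼 n) ∈ K}
  have hT : MeasurableSet T := hK.1.isClosed.measurableSet.preimage (by fun_prop)
  have hpre : homeomorphUnitSphereProd (𝔼 n) ⁻¹' T = Subtype.val ⁻¹' K := by
    ext x
    simp [T, smul_inv_smul₀ (norm_ne_zero_iff.2 x.2)]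
  have hsection (u : 𝕊 n) : Prod.mk u ⁻¹' T = Iic ⟨radialFn K u, hK.radialFn_pos u⟩ := by
    ext r
    exact hK.smul_mem_iff u r.2.out.le
  have hvolume : volume.comap (Subtype.val : ({0}ᶜ : Set (𝔼 n)) → 𝔼 n) (Subtype.val ⁻¹' K) =
      volume K := by
    rw [(MeasurableEmbedding.subtype_coe (measurableSet_singleton 0).compl).comap_apply,
      image_preimage_eq_inter_range, Subtype.range_coe, ← sdiff_eq,
      measure_sdiff_null (measure_singleton _)]
  rw [← hvolume, ← hpre, hpolar.measure_preimage hT.nullMeasurableSet, Measure.prod_apply hT]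
  refine lintegral_congr fun u => ?_
  rw [hsection, Measure.volumeIoiPow_apply_Iic, Nat.sub_add_cancel hn, Nat.cast_pred hn,
    sub_add_cancel]

theorem integral_radialFn_pow (hn : 0 < n) (hK : IsStarBody K) :
    ∫ u, radialFn K u ^ n ∂sphereMeasure n = n * (volume K).toReal := by
  have hdiv : ∫ u, radialFn K u ^ n / n ∂sphereMeasure n = (volume K).toReal := by
    rw [integral_eq_lintegral_of_nonneg_ae
      (.of_forall fun u => by have := radialFn_nonneg K u; positivity)
      (hK.continuous_radialFn_pow_div _).aestronglyMeasurable, hK.lintegral_radialFn_pow hn]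
  rw [integral_div, div_eq_iff (Nat.cast_ne_zero.2 hn.ne')] at hdiv
  rw [hdiv, mul_comm]

theorem integral_normDualConical (hK : IsStarBody K) (g : (𝕊 n) → ℝ) :
    ∫ u, g u ∂normDualConical n K =
      ∫ u, radialFn K u ^ n / (n * (volume K).toReal) * g u ∂sphereMeasure n := by
  rw [normDualConical, integral_withDensity_eq_integral_toReal_smul
    (hK.continuous_radialFn_pow_div _).measurable.ennreal_ofReal (.of_forall fun _ => by simp)]
  congr with u
  rw [ENNReal.toReal_ofReal (by have := radialFn_nonneg K u; positivity), smul_eq_mul]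

theorem isProbabilityMeasure_normDualConical (hn : 0 < n) (hK : IsStarBody K) :
    IsProbabilityMeasure (normDualConical n K) := by
  constructor
  rw [normDualConical, withDensity_apply _ .univ, Measure.restrict_univ,
    ← ofReal_integral_eq_lintegral_ofReal
      (hK.continuous_radialFn_pow_div _).integrable_of_compactSpace
      (.of_forall fun u => by have := radialFn_nonneg K u; positivity),
    integral_div, hK.integral_radialFn_pow hn,
    div_self (by have := hK.toReal_volume_pos; positivity), ENNReal.ofReal_one]

theorem isOpenPosMeasure_normDualConical (hn : 0 < n) (hK : IsStarBody K) :
    (normDualConical n K).IsOpenPosMeasure :=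
  (withDensity_absolutelyContinuous'
    (hK.continuous_radialFn_pow_div _).measurable.ennreal_ofReal.aemeasurable
    (.of_forall fun u => by
      have := hK.radialFn_pos u; have := hK.toReal_volume_pos; simp; positivity)).isOpenPosMeasure

theorem continuous_radialFn_div (hK : IsStarBody K) (hL : IsStarBody L) :
    Continuous fun u : 𝕊 n => radialFn K u / radialFn L u :=
  hK.2.2.2.div hL.2.2.2 fun u => (hL.radialFn_pos u).ne'

theorem radialFn_div_pos (hK : IsStarBody K) (hL : IsStarBody L) (u : 𝕊 n) :
    0 < radialFn K u / radialFn L u :=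
  div_pos (hK.radialFn_pos u) (hL.radialFn_pos u)

theorem integral_radialFn_div_zpow (hn : 0 < n) (hK : IsStarBody K) (hL : IsStarBody L) :
    ∫ u, (radialFn K u / radialFn L u) ^ (-(n : ℤ)) ∂normDualConical n K =
      (volume L).toReal / (volume K).toReal := by
  have hpt (u : 𝕊 n) : radialFn K u ^ n / (n * (volume K).toReal) *
      (radialFn K u / radialFn L u) ^ (-(n : ℤ)) = radialFn L u ^ n / (n * (volume K).toReal) := by
    have := (hK.radialFn_pos u).ne'
    have := (hL.radialFn_pos u).ne'
    rw [zpow_neg, zpow_natCast, div_pow]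
    field_simp
  simp only [hK.integral_normDualConical, hpt, integral_div, hL.integral_radialFn_pow hn]
  field_simp

theorem radialFn_eq_integral_mul_of_volume_eq (hn : 0 < n) (hK : IsStarBody K)
    (hL : IsStarBody L) (h : (volume K).toReal =
      (volume L).toReal * (∫ u, radialFn K u / radialFn L u ∂normDualConical n K) ^ n)
    (u : 𝕊 n) :
    radialFn K u = (∫ u, radialFn K u / radialFn L u ∂normDualConical n K) * radialFn L u := by
  have := hK.isProbabilityMeasure_normDualConical hn
  have := hK.isOpenPosMeasure_normDualConical hn
  have hzpow : (∫ u, radialFn K u / radialFn L u ∂normDualConical n K) ^ (-(n : ℤ)) =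
      (volume L).toReal / (volume K).toReal := by
    have := hL.toReal_volume_pos
    rw [zpow_neg, zpow_natCast, h]
    field_simp
  have hconv : StrictConvexOn ℝ (Ioi 0) fun x : ℝ => x ^ (-(n : ℤ)) :=
    strictConvexOn_zpow (by omega) (by omega)
  rcases hconv.ae_eq_integral_or_map_integral_lt_of_pos (μ := normDualConical n K) (hK.continuous_radialFn_div hL) (hK.radialFn_div_pos hL)
    with hconst | hlt
  · rw [← div_eq_iff (hL.radialFn_pos u).ne']
    exact congrFun ((hK.continuous_radialFn_div hL).ae_eq_iff_eq _ continuous_const |>.1 hconst) u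
  · rw [hK.integral_radialFn_div_zpow hn hL, hzpow] at hlt
    exact absurd hlt (lt_irrefl _)

theorem volume_le_mul_integral_radialFn_div_pow (hn : 0 < n) (hK : IsStarBody K)
    (hL : IsStarBody L) : (volume K).toReal ≤
      (volume L).toReal * (∫ u, radialFn K u / radialFn L u ∂normDualConical n K) ^ n := by
  have := hK.isProbabilityMeasure_normDualConical hn
  have hI := (hK.continuous_radialFn_div hL).integral_pos_of_pos (hK.radialFn_div_pos hL)
    (μ := normDualConical n K)
  have h : (∫ u, radialFn K u / radialFn L u ∂normDualConical n K) ^ (-(n : ℤ)) ≤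
      (volume L).toReal / (volume K).toReal := by
    rw [← hK.integral_radialFn_div_zpow hn hL]
    exact (strictConvexOn_zpow (by omega) (by omega)).convexOn.map_integral_le_of_pos
      (hK.continuous_radialFn_div hL) (hK.radialFn_div_pos hL)
  rwa [zpow_neg, zpow_natCast, inv_le_iff_one_le_mul₀ (pow_pos hI n), div_mul_eq_mul_div,
    one_le_div₀ hK.toReal_volume_pos] at h

theorem integral_radialFn_div_le_ofun (hn : 0 < n) (hK : IsStarBody K) (hL : IsStarBody L)
    (hφc : ConvexOn ℝ (Ioi 0) φ) (hφm : StrictMonoOn φ (Ioi 0)) :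
    ∫ u, radialFn K u / radialFn L u ∂normDualConical n K ≤ Ofun n φ K L := by
  have := hK.isProbabilityMeasure_normDualConical hn
  simpa only [Ofun, div_mul_eq_div_div_swap] using
    integral_le_sInf_of_convexOn hφc hφm (hK.continuous_radialFn_div hL) (hK.radialFn_div_pos hL)

theorem ofun_self_le_one (hn : 0 < n) (hK : IsStarBody K) : Ofun n φ K K ≤ 1 := by
  have := hK.isProbabilityMeasure_normDualConical hn
  refine csInf_le ⟨0, fun t ht => ht.1.le⟩ ⟨one_pos, le_of_eq ?_⟩
  simp [div_self (hK.radialFn_pos _).ne']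

end IsStarBody

theorem orliczLegendre_volume_ge_general
    (n : ℕ) (hn : 0 < n) (K : Set (EuclideanSpace ℝ (Fin n))) (hK : IsStarBody K)
    (φ : ℝ → ℝ)
    (hφconv : ConvexOn ℝ (Ici (0 : ℝ)) φ)
    (hφmono : StrictMonoOn φ (Ici (0 : ℝ)))
    (L : Set (EuclideanSpace ℝ (Fin n))) (hL : IsEllipsoid L)
    (hLfeas : Ofun n φ K L ≤ 1)
    (hLmin : ∀ E : Set (EuclideanSpace ℝ (Fin n)), IsEllipsoid E →
      Ofun n φ K E ≤ 1 → volume L ≤ volume E) :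
    volume K ≤ volume L ∧ (volume L = volume K ↔ IsEllipsoid K) := by
  have hLbody := hL.isStarBody
  set I := ∫ u, radialFn K u / radialFn L u ∂normDualConical n K
  have hI1 : I ≤ 1 := (hK.integral_radialFn_div_le_ofun hn hLbody
    (hφconv.subset Ioi_subset_Ici_self (convex_Ioi 0)) (hφmono.mono Ioi_subset_Ici_self)).trans
    hLfeas
  have hI0 : 0 ≤ I := integral_nonneg fun u => (hK.radialFn_div_pos hLbody u).le
  have hIn : I ^ n ≤ 1 := pow_le_one₀ hI0 hI1
  have hVL := hLbody.toReal_volume_pos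
  have hdual := hK.volume_le_mul_integral_radialFn_div_pow hn hLbody
  have hle : volume K ≤ volume L := by
    rw [← ENNReal.toReal_le_toReal hK.volume_ne_top hLbody.volume_ne_top]
    exact hdual.trans (mul_le_of_le_one_right hVL.le hIn)
  refine ⟨hle, fun heq => ?_, fun hKE => (hLmin K hKE (hK.ofun_self_le_one hn)).antisymm hle⟩
  have hVeq : (volume L).toReal = (volume K).toReal := congrArg ENNReal.toReal heq
  have hIn1 : I ^ n = 1 :=
    hIn.antisymm <| (mul_le_mul_iff_right₀ hVL).1 <| by simpa [hVeq] using hdual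
  have hI : I = 1 := (pow_eq_one_iff_of_nonneg hI0 hn.ne').1 hIn1
  have hρ : ∀ u : 𝕊 n, radialFn K u = I * radialFn L u :=
    hK.radialFn_eq_integral_mul_of_volume_eq hn hLbody (by rw [hIn1, hVeq, mul_one])
  rw [hK.eq_of_radialFn_eq hLbody fun u => by rw [hρ, hI, one_mul]]
  exact hL

/-- Let `K` be a star body about the origin, `φ ∈ Φ`, and let
`L = L_φ K` be the Orlicz-Legendre ellipsoid, i.e. an origin-symmetric ellipsoid
with `O_φ(K,L) ≤ 1` of minimal volume among all such ellipsoids.  Then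
`V(L_φ K) ≥ V(K)`, with equality if and only if `K` is an origin-symmetric
ellipsoid. -/
theorem orliczLegendre_volume_ge
    (n : ℕ) (hn : 0 < n) (K : Set (EuclideanSpace ℝ (Fin n))) (hK : IsStarBody K)
    (φ : ℝ → ℝ)
    (hφconv : ConvexOn ℝ (Ici (0 : ℝ)) φ)
    (hφmono : StrictMonoOn φ (Ici (0 : ℝ)))
    (hφ0 : φ 0 = 0)
    (L : Set (EuclideanSpace ℝ (Fin n))) (hL : IsEllipsoid L)
    (hLfeas : Ofun n φ K L ≤ 1)
    (hLmin : ∀ E : Set (EuclideanSpace ℝ (Fin n)), IsEllipsoid E →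
      Ofun n φ K E ≤ 1 → volume L ≤ volume E) :
    volume K ≤ volume L ∧ (volume L = volume K ↔ IsEllipsoid K) :=
  orliczLegendre_volume_ge_general n hn K hK φ hφconv hφmono L hL hLfeas hLmin
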